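/- arXiv:2409.18894 — 2 statements merged into one kernel-verified Lean document; each statement's English description precedes it below -/
import Mathlib

section
/- Let g, κ : [0,∞) → ℝ be non-decreasing, right-continuous with left limits, g(0)=κ(0)=0, both strictly positive on (0,∞) and unbounded, and suppose the pair (g,κ) is compatible: (H1) whenever g jumps at u, the level set {r : κ(r) = u} has positive length, and (H2) whenever κ(s−) < κ(s), g(κ(s−)) = g(κ(s)−). Then the smooth composition g ∘̃ κ satisfies g(κ(t)−) ≤ (g ∘̃ κ)(t) ≤ g(κ(t)) for all t ≥ 0. -/
open Set Function Filter

/-- Right-continuous generalized inverse: `h⁻¹(s) = inf {u > 0 : h(u) > s}`. -/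
noncomputable def ginv (h : ℝ → ℝ) (s : ℝ) : ℝ := sInf {u : ℝ | 0 < u ∧ s < h u}

/-- Left limit of a function monotone on `[0,∞)`, with the convention `h(0−) = h(0)`. -/
noncomputable def llim (h : ℝ → ℝ) (u : ℝ) : ℝ :=
  if u ≤ 0 then h 0 else sSup (h '' Set.Ico 0 u)

/-- Right-continuity on `[0,∞)`. -/
def RightCts (h : ℝ → ℝ) : Prop := ∀ x : ℝ, 0 ≤ x → ContinuousWithinAt h (Set.Ici x) x

/-- The class `D₀↑↑(ℝ₊)`: non-decreasing, right-continuous, `h 0 = 0`, strictly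
positive on `(0,∞)`, and unbounded. -/
def Dpp (h : ℝ → ℝ) : Prop :=
  MonotoneOn h (Set.Ici 0) ∧ RightCts h ∧ h 0 = 0 ∧ (∀ t : ℝ, 0 < t → 0 < h t) ∧
    (∀ M : ℝ, ∃ t : ℝ, 0 ≤ t ∧ M < h t)

/-- `h` jumps at `u`: `h(u−) < h(u)`. -/
noncomputable def JumpAt (h : ℝ → ℝ) (u : ℝ) : Prop := llim h u < h u

/-- Compatibility condition (H1): whenever `g` jumps at `u`, the level set
`{r ≥ 0 : κ r = u}` has positive length. -/
def H1 (g κ : ℝ → ℝ) : Prop :=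
  ∀ u : ℝ, JumpAt g u → ∃ r₁ r₂ : ℝ, 0 ≤ r₁ ∧ r₁ < r₂ ∧ κ r₁ = u ∧ κ r₂ = u

/-- Compatibility condition (H2): whenever `κ(s−) < κ(s)`, `g(κ(s−)) = g(κ(s)−)`. -/
def H2 (g κ : ℝ → ℝ) : Prop :=
  ∀ s : ℝ, 0 ≤ s → llim κ s < κ s → g (llim κ s) = llim g (κ s)

-- Smooth composition `g ∘̃ κ`: equal to `g ∘ κ` outside the intervals
-- `[κ⁻¹(u−), κ⁻¹(u)]` over jump points `u` of `g`, and on each such interval the linear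
-- interpolation between `(κ⁻¹(u−), g(u−))` and `(κ⁻¹(u), g(u))`.
open scoped Classical in
noncomputable def stilde (g κ : ℝ → ℝ) (s : ℝ) : ℝ :=
  if h : ∃ u : ℝ, JumpAt g u ∧ s ∈ Set.Icc (llim (ginv κ) u) (ginv κ u) then
    let u := Classical.choose h
    llim g u + (g u - llim g u) * (s - llim (ginv κ) u) / (ginv κ u - llim (ginv κ) u)
  else g (κ s)

/-!
Outside the intervals `[κ⁻¹(u−), κ⁻¹(u)]` the claim is just `g(κ(t)−) ≤ g(κ(t))`. On such an
interval, for a jump point `u` of `g`, (H1) makes the interval nondegenerate, so the interpolated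
value lies between `g(u−)` and `g(u)`, and `κ(t) ≥ u` by right-continuity of `κ`. Either
`κ(t) = u`, or `κ` jumps over the level `u` at `t = κ⁻¹(u)`; there the interpolant equals `g(u)`
and (H2) gives `g(κ(t)−) = g(κ(t−)) ≤ g(u)`.
-/

lemma not_jumpAt_zero (h : ℝ → ℝ) : ¬ JumpAt h 0 := by
  simp [JumpAt, llim]

lemma llim_le_of_forall {h : ℝ → ℝ} {u c : ℝ} (hu : 0 < u)
    (hc : ∀ r, 0 ≤ r → r < u → h r ≤ c) : llim h u ≤ c := by
  rw [llim, if_neg hu.not_ge]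
  refine csSup_le ⟨h 0, 0, ⟨le_rfl, hu⟩, rfl⟩ ?_
  rintro _ ⟨r, ⟨hr0, hru⟩, rfl⟩
  exact hc r hr0 hru

lemma le_llim {h : ℝ → ℝ} (hm : MonotoneOn h (Ici 0)) {r u : ℝ} (hr : 0 ≤ r) (hru : r < u) :
    h r ≤ llim h u := by
  rw [llim, if_neg (hr.trans_lt hru).not_ge]
  refine le_csSup ⟨h u, ?_⟩ ⟨r, ⟨hr, hru⟩, rfl⟩
  rintro _ ⟨r', ⟨hr'0, hr'u⟩, rfl⟩
  exact hm hr'0 (hr.trans hru.le) hr'u.le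

lemma llim_le_self {h : ℝ → ℝ} (hm : MonotoneOn h (Ici 0)) {x : ℝ} (hx : 0 ≤ x) :
    llim h x ≤ h x := by
  rcases hx.eq_or_lt with rfl | hx
  · simp [llim]
  · exact llim_le_of_forall hx fun r hr hrx => hm hr hx.le hrx.le

lemma ginv_le {h : ℝ → ℝ} {r s : ℝ} (hr : 0 < r) (hs : s < h r) : ginv h s ≤ r :=
  csInf_le ⟨0, fun _ hx => hx.1.le⟩ ⟨hr, hs⟩

lemma llim_ginv_le {h : ℝ → ℝ} {u r : ℝ} (hu : 0 < u) (hr : 0 < r) (hur : u ≤ h r) :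
    llim (ginv h) u ≤ r :=
  llim_le_of_forall hu fun _ _ hu' => ginv_le hr (hu'.trans_le hur)

namespace Dpp

variable {h : ℝ → ℝ}

lemma nonneg (hh : Dpp h) {x : ℝ} (hx : 0 ≤ x) : 0 ≤ h x :=
  hh.2.2.1 ▸ hh.1 (mem_Ici.2 le_rfl) hx hx

lemma setOf_pos_lt_nonempty (hh : Dpp h) (s : ℝ) : {r : ℝ | 0 < r ∧ s < h r}.Nonempty := by
  obtain ⟨t, ht, hst⟩ := hh.2.2.2.2 s
  exact ⟨t + 1, by linarith, hst.trans_le (hh.1 ht (by simp; linarith) (by linarith))⟩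

lemma le_ginv (hh : Dpp h) {r s : ℝ} (hr : 0 ≤ r) (hrs : h r ≤ s) : r ≤ ginv h s := by
  refine le_csInf (hh.setOf_pos_lt_nonempty s) ?_
  rintro r' ⟨hr', hsr'⟩
  by_contra! hr'r
  linarith [hh.1 hr'.le hr hr'r.le]

lemma ginv_mono (hh : Dpp h) : Monotone (ginv h) := fun _ _ hss' =>
  csInf_le_csInf ⟨0, fun _ hx => hx.1.le⟩ (hh.setOf_pos_lt_nonempty _)
    fun _ ⟨hr, hs'r⟩ => ⟨hr, hss'.trans_lt hs'r⟩

/-- Past `h⁻¹(u−)` the function `h` has reached the level `u`; right-continuity extends this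
to `h⁻¹(u−)` itself. -/
lemma le_of_llim_ginv_le (hh : Dpp h) {t u : ℝ} (ht : 0 ≤ t) (htu : llim (ginv h) u ≤ t) :
    u ≤ h t := by
  have hlevel : ∀ s, t < s → u ≤ h s := by
    intro s hts
    by_contra! hsu
    have hs_le : s ≤ ginv h (h s) := hh.le_ginv (ht.trans hts.le) le_rfl
    have hginv_le : ginv h (h s) ≤ llim (ginv h) u :=
      le_llim (hh.ginv_mono.monotoneOn _) (hh.nonneg (ht.trans hts.le)) hsu
    linarith
  exact ge_of_tendsto ((hh.2.1 t ht).mono_left (nhdsWithin_mono _ Ioi_subset_Ici_self))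
    (eventually_nhdsWithin_of_forall hlevel)

lemma llim_le_of_le_ginv (hh : Dpp h) {b u : ℝ} (hb : 0 < b) (hu : 0 ≤ u)
    (hbu : b ≤ ginv h u) : llim h b ≤ u := by
  refine llim_le_of_forall hb fun r hr hrb => ?_
  by_contra! hur
  rcases hr.eq_or_lt with rfl | hr
  · linarith [hh.2.2.1]
  · linarith [ginv_le hr hur]

end Dpp

/-- At the point `b = κ⁻¹(u)` where `κ` jumps over the level `u`, (H2) identifies
`g(κ(b)−)` with `g(κ(b−))`, and `κ(b−) ≤ u`. -/
lemma H2.llim_apply_le {g κ : ℝ → ℝ} (h2 : H2 g κ) (hg : MonotoneOn g (Ici 0)) (hκ : Dpp κ)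
    {b u : ℝ} (hb : 0 < b) (hu : 0 ≤ u) (hub : u < κ b) (hbu : b ≤ ginv κ u) :
    llim g (κ b) ≤ g u := by
  have hκb : llim κ b ≤ u := hκ.llim_le_of_le_ginv hb hu hbu
  rw [← h2 b hb.le (hκb.trans_lt hub)]
  exact hg ((hκ.nonneg le_rfl).trans (le_llim hκ.1 le_rfl hb)) hu hκb

lemma lerp_mem_Icc {p q a b t : ℝ} (hpq : p ≤ q) (hab : a < b) (ht : t ∈ Icc a b) :
    p + (q - p) * (t - a) / (b - a) ∈ Icc p q := by
  have hθ0 : 0 ≤ (t - a) / (b - a) := div_nonneg (by linarith [ht.1]) (by linarith)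
  have hθ1 : (t - a) / (b - a) ≤ 1 := (div_le_one (by linarith)).2 (by linarith [ht.2])
  rw [mul_div_assoc]
  constructor <;> nlinarith

lemma lerp_right (p q : ℝ) {a b : ℝ} (hab : a ≠ b) : p + (q - p) * (b - a) / (b - a) = q := by
  rw [mul_div_assoc, div_self (sub_ne_zero.2 hab.symm)]
  ring

/-- For a compatible pair, `g(κ(t)−) ≤ (g ∘̃ κ)(t) ≤ g(κ(t))`. -/
theorem stmt5 (g κ : ℝ → ℝ) (hg : Dpp g) (hκ : Dpp κ)
    (h1 : H1 g κ) (h2 : H2 g κ) :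
    ∀ t : ℝ, 0 ≤ t → llim g (κ t) ≤ stilde g κ t ∧ stilde g κ t ≤ g (κ t) := by
  intro t ht
  rw [stilde]
  split_ifs with hj
  · obtain ⟨hju, hta, htb⟩ := Classical.choose_spec hj
    set u := Classical.choose hj
    obtain ⟨r₁, r₂, hr₁, hr₁₂, hκr₁, hκr₂⟩ := h1 u hju
    have hu : 0 < u := (hκr₁ ▸ hκ.nonneg hr₁).lt_of_ne fun h0 => not_jumpAt_zero g (h0 ▸ hju)
    have hr₁pos : 0 < r₁ := hr₁.lt_of_ne fun h0 => hu.ne (by rw [← hκr₁, ← h0, hκ.2.2.1])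
    have hab : llim (ginv κ) u < ginv κ u := (llim_ginv_le hu hr₁pos hκr₁.ge).trans_lt
      (hr₁₂.trans_le (hκ.le_ginv (hr₁.trans hr₁₂.le) hκr₂.le))
    rcases (hκ.le_of_llim_ginv_le ht hta).eq_or_lt with heq | hlt
    · rw [← heq]
      exact lerp_mem_Icc hju.le hab ⟨hta, htb⟩
    · have htpos : 0 < t := ht.lt_of_ne fun h0 => by linarith [hκ.2.2.1, h0 ▸ hlt]
      have ht_eq : t = ginv κ u := le_antisymm htb (ginv_le htpos hlt)
      rw [ht_eq] at htpos hlt ⊢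
      rw [lerp_right _ _ hab.ne]
      exact ⟨h2.llim_apply_le hg.1 hκ htpos hu.le hlt le_rfl,
        hg.1 hu.le (hκ.nonneg htpos.le) hlt.le⟩
  · exact ⟨llim_le_self hg.1 (hκ.nonneg ht), le_rfl⟩
end

section
/- Let g, κ be a compatible pair of non-decreasing, right-continuous, unbounded functions on [0,∞) with g(0)=κ(0)=0 and strictly positive on (0,∞). Then the smooth composition γ = g ∘̃ κ is non-decreasing and right-continuous with left limits. -/
open Set Function Filter

section Aux

variable {g κ : ℝ → ℝ}

lemma dpp_nonneg (h : Dpp κ) {t : ℝ} (ht : 0 ≤ t) : 0 ≤ κ t := by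
  have := h.1 (Set.self_mem_Ici) ht ht
  rwa [h.2.2.1] at this

lemma ginv_set_nonempty (h : Dpp κ) (s : ℝ) : {u : ℝ | 0 < u ∧ s < κ u}.Nonempty := by
  obtain ⟨t, ht0, hts⟩ := h.2.2.2.2 (max s 0)
  have h1 : κ t ≤ κ (t + 1) := h.1 (Set.mem_Ici.2 ht0) (Set.mem_Ici.2 (by linarith)) (by linarith)
  have h2 : s ≤ max s 0 := le_max_left _ _
  exact ⟨t + 1, by linarith, by linarith⟩

lemma ginv_bddBelow (s : ℝ) : BddBelow {u : ℝ | 0 < u ∧ s < κ u} :=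
  ⟨0, fun x hx => hx.1.le⟩

lemma ginv_nonneg (h : Dpp κ) (s : ℝ) : 0 ≤ ginv κ s :=
  le_csInf (ginv_set_nonempty h s) (fun b hb => hb.1.le)

lemma ginv_mono (h : Dpp κ) : Monotone (ginv κ) := fun s t hst =>
  csInf_le_csInf (ginv_bddBelow s) (ginv_set_nonempty h t)
    (fun x hx => ⟨hx.1, lt_of_le_of_lt hst hx.2⟩)

lemma ginv_le_s7 (_h : Dpp κ) {v s : ℝ} (hs : 0 < s) (hv : v < κ s) : ginv κ v ≤ s :=
  csInf_le (ginv_bddBelow v) ⟨hs, hv⟩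

lemma kappa_le_of_lt_ginv (h : Dpp κ) {v s : ℝ} (hv : 0 ≤ v) (hs : 0 ≤ s)
    (hlt : s < ginv κ v) : κ s ≤ v := by
  rcases eq_or_lt_of_le hs with rfl | hs'
  · rw [h.2.2.1]; exact hv
  · by_contra hgt
    push_neg at hgt
    exact absurd (ginv_le_s7 h hs' hgt) (not_le.2 hlt)

lemma lt_kappa_of_ginv_lt (h : Dpp κ) {v t : ℝ} (hlt : ginv κ v < t) : v < κ t := by
  obtain ⟨τ, hτ, hτt⟩ := exists_lt_of_csInf_lt (ginv_set_nonempty h v) hlt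
  exact hτ.2.trans_le (h.1 hτ.1.le (hτ.1.le.trans hτt.le) hτt.le)

lemma llim_le_self_s7 {h : ℝ → ℝ} (hm : MonotoneOn h (Set.Ici 0)) {v : ℝ} (hv : 0 ≤ v) :
    llim h v ≤ h v := by
  rw [llim]
  split_ifs with h0
  · exact hm (Set.self_mem_Ici) hv hv
  · push_neg at h0
    refine csSup_le ⟨h 0, ⟨0, ⟨le_rfl, h0⟩, rfl⟩⟩ ?_
    rintro b ⟨a, ⟨ha0, hav⟩, rfl⟩
    exact hm ha0 hv hav.le

lemma bddAbove_Ico_image {h : ℝ → ℝ} (hm : MonotoneOn h (Set.Ici 0)) {v : ℝ} (hv : 0 ≤ v) :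
    BddAbove (h '' Set.Ico 0 v) :=
  ⟨h v, by rintro b ⟨a, ⟨ha0, hav⟩, rfl⟩; exact hm ha0 hv hav.le⟩

lemma le_llim_s7 {h : ℝ → ℝ} (hm : MonotoneOn h (Set.Ici 0)) {a v : ℝ} (ha : 0 ≤ a)
    (hav : a < v) : h a ≤ llim h v := by
  rw [llim, if_neg (not_le.2 (lt_of_le_of_lt ha hav))]
  exact le_csSup (bddAbove_Ico_image hm (ha.trans hav.le)) ⟨a, ⟨ha, hav⟩, rfl⟩

lemma ell_nonneg (h : Dpp κ) {u : ℝ} (hu : 0 < u) : 0 ≤ llim (ginv κ) u :=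
  (ginv_nonneg h 0).trans (le_llim_s7 ((ginv_mono h).monotoneOn _) le_rfl hu)

lemma jump_pos (h1 : H1 g κ) (hκ : Dpp κ) {u : ℝ} (hu : JumpAt g u) : 0 < u := by
  obtain ⟨r₁, _r₂, hr₁, _, hκr₁, _⟩ := h1 u hu
  have hu0 : 0 ≤ u := hκr₁ ▸ dpp_nonneg hκ hr₁
  rcases eq_or_lt_of_le hu0 with rfl | h
  · exfalso
    have hll : llim g (0:ℝ) = g 0 := by rw [llim, if_pos le_rfl]
    have : llim g (0:ℝ) < g 0 := hu
    rw [hll] at this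
    exact lt_irrefl _ this
  · exact h

lemma ell_le_of_kappa_eq (hκ : Dpp κ) {u s : ℝ} (hu : 0 < u) (hs : 0 ≤ s) (h : κ s = u) :
    llim (ginv κ) u ≤ s := by
  rw [llim, if_neg (not_le.2 hu)]
  refine csSup_le ⟨ginv κ 0, ⟨0, ⟨le_rfl, hu⟩, rfl⟩⟩ ?_
  rintro b ⟨v, ⟨hv0, hvu⟩, rfl⟩
  by_contra hlt
  push_neg at hlt
  exact absurd (kappa_le_of_lt_ginv hκ hv0 hs hlt) (by rw [h]; exact not_le.2 hvu)

lemma le_ginv_of_kappa_eq (hκ : Dpp κ) {u s : ℝ} (hs : 0 ≤ s) (h : κ s = u) :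
    s ≤ ginv κ u := by
  refine le_csInf (ginv_set_nonempty hκ u) ?_
  rintro τ ⟨hτ0, hτ⟩
  by_contra hc
  push_neg at hc
  exact absurd (hκ.1 hτ0.le hs hc.le) (by rw [h]; exact not_le.2 hτ)

lemma ell_lt_ginv (hκ : Dpp κ) (h1 : H1 g κ) {u : ℝ} (hu : JumpAt g u) :
    llim (ginv κ) u < ginv κ u := by
  obtain ⟨r₁, r₂, hr₁0, hr12, hk1, hk2⟩ := h1 u hu
  have hu0 := jump_pos h1 hκ hu
  calc llim (ginv κ) u ≤ r₁ := ell_le_of_kappa_eq hκ hu0 hr₁0 hk1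
    _ < r₂ := hr12
    _ ≤ ginv κ u := le_ginv_of_kappa_eq hκ (hr₁0.trans hr12.le) hk2

lemma kappa_eq_of_mem_Ioo (hκ : Dpp κ) {u s : ℝ} (hu : 0 < u)
    (hs : s ∈ Set.Ioo (llim (ginv κ) u) (ginv κ u)) : κ s = u := by
  have hs0 : 0 < s := lt_of_le_of_lt (ell_nonneg hκ hu) hs.1
  have hle : κ s ≤ u := by
    by_contra hgt
    push_neg at hgt
    exact absurd (ginv_le_s7 hκ hs0 hgt) (not_le.2 hs.2)
  have hge : u ≤ κ s := by
    by_contra hlt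
    push_neg at hlt
    have hv0 : 0 ≤ κ s := dpp_nonneg hκ hs0.le
    have h' : ginv κ (κ s) ≤ llim (ginv κ) u :=
      le_llim_s7 ((ginv_mono hκ).monotoneOn _) hv0 hlt
    exact absurd (lt_kappa_of_ginv_lt hκ (h'.trans_lt hs.1)) (lt_irrefl _)
  linarith

lemma kappa_ell (hκ : Dpp κ) {u : ℝ} (hu : 0 < u)
    (hlt : llim (ginv κ) u < ginv κ u) : κ (llim (ginv κ) u) = u := by
  set ℓ := llim (ginv κ) u with hℓ
  have hℓ0 : 0 ≤ ℓ := ell_nonneg hκ hu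
  have htend : Filter.Tendsto κ (nhdsWithin ℓ (Set.Ioi ℓ)) (nhds (κ ℓ)) :=
    (hκ.2.1 ℓ hℓ0).mono_left (nhdsWithin_mono _ Set.Ioi_subset_Ici_self)
  have heq : ∀ᶠ t in nhdsWithin ℓ (Set.Ioi ℓ), κ t = u := by
    filter_upwards [Ioo_mem_nhdsGT_of_mem (show ℓ ∈ Set.Ico ℓ (ginv κ u) from ⟨le_rfl, hlt⟩)]
      with t ht
    exact kappa_eq_of_mem_Ioo hκ hu ht
  have htend2 : Filter.Tendsto κ (nhdsWithin ℓ (Set.Ioi ℓ)) (nhds u) :=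
    Filter.Tendsto.congr' (by filter_upwards [heq] with t ht; exact ht.symm) tendsto_const_nhds
  exact tendsto_nhds_unique htend htend2

lemma kappa_ginv_ge (hκ : Dpp κ) (u : ℝ) : u ≤ κ (ginv κ u) := by
  set r := ginv κ u with hr
  have hr0 : 0 ≤ r := ginv_nonneg hκ u
  have htend : Filter.Tendsto κ (nhdsWithin r (Set.Ioi r)) (nhds (κ r)) :=
    (hκ.2.1 r hr0).mono_left (nhdsWithin_mono _ Set.Ioi_subset_Ici_self)
  refine ge_of_tendsto htend ?_
  filter_upwards [self_mem_nhdsWithin] with t ht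
  exact (lt_kappa_of_ginv_lt hκ ht).le

lemma llim_kappa_ginv (hκ : Dpp κ) {u : ℝ} (hu : 0 < u)
    (hlt : llim (ginv κ) u < ginv κ u) : llim κ (ginv κ u) = u := by
  set ℓ := llim (ginv κ) u with hℓ
  set r := ginv κ u with hr
  have hℓ0 : 0 ≤ ℓ := ell_nonneg hκ hu
  have hr0 : 0 < r := lt_of_le_of_lt hℓ0 hlt
  rw [llim, if_neg (not_le.2 hr0)]
  have hub : ∀ b ∈ κ '' Set.Ico 0 r, b ≤ u := by
    rintro b ⟨t, ⟨ht0, htr⟩, rfl⟩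
    rcases le_or_gt t ℓ with h | h
    · calc κ t ≤ κ ℓ := hκ.1 ht0 hℓ0 h
        _ = u := kappa_ell hκ hu hlt
    · exact (kappa_eq_of_mem_Ioo hκ hu ⟨h, htr⟩).le
  refine le_antisymm (csSup_le ⟨κ 0, ⟨0, ⟨le_rfl, hr0⟩, rfl⟩⟩ hub) ?_
  have hmid : (ℓ + r) / 2 ∈ Set.Ioo ℓ r := ⟨by linarith, by linarith⟩
  have hmidk := kappa_eq_of_mem_Ioo hκ hu hmid
  calc u = κ ((ℓ + r) / 2) := hmidk.symm
    _ ≤ sSup (κ '' Set.Ico 0 r) :=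
        le_csSup ⟨u, hub⟩ ⟨(ℓ + r) / 2, ⟨by linarith, hmid.2⟩, rfl⟩

lemma overlap (hκ : Dpp κ) (h1 : H1 g κ) (h2 : H2 g κ)
    {u u' s : ℝ} (hu : JumpAt g u) (hu' : JumpAt g u') (huu : u < u')
    (hs : s ∈ Set.Icc (llim (ginv κ) u) (ginv κ u))
    (hs' : s ∈ Set.Icc (llim (ginv κ) u') (ginv κ u')) :
    s = ginv κ u ∧ s = llim (ginv κ) u' ∧ g u = llim g u' := by
  have hu0 := jump_pos h1 hκ hu
  have hu'0 := jump_pos h1 hκ hu'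
  have hij : ginv κ u ≤ llim (ginv κ) u' :=
    le_llim_s7 ((ginv_mono hκ).monotoneOn _) hu0.le huu
  have e1 : s = ginv κ u := le_antisymm hs.2 (hij.trans hs'.1)
  have e2 : s = llim (ginv κ) u' := le_antisymm (by rw [e1]; exact hij) hs'.1
  have hlt := ell_lt_ginv hκ h1 hu
  have hlt' := ell_lt_ginv hκ h1 hu'
  have hks : κ s = u' := by rw [e2]; exact kappa_ell hκ hu'0 hlt'
  have hlks : llim κ s = u := by rw [e1]; exact llim_kappa_ginv hκ hu0 hlt
  have hs0 : 0 ≤ s := by rw [e1]; exact ginv_nonneg hκ u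
  have hmain := h2 s hs0 (by rw [hlks, hks]; exact huu)
  rw [hlks, hks] at hmain
  exact ⟨e1, e2, hmain⟩

lemma stilde_eq (hκ : Dpp κ) (h1 : H1 g κ) (h2 : H2 g κ)
    {u s : ℝ} (hu : JumpAt g u) (hs : s ∈ Set.Icc (llim (ginv κ) u) (ginv κ u)) :
    stilde g κ s =
      llim g u + (g u - llim g u) * (s - llim (ginv κ) u) / (ginv κ u - llim (ginv κ) u) := by
  have hex : ∃ u : ℝ, JumpAt g u ∧ s ∈ Set.Icc (llim (ginv κ) u) (ginv κ u) := ⟨u, hu, hs⟩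
  rw [stilde, dif_pos hex]
  obtain ⟨hu₀, hs₀⟩ := Classical.choose_spec hex
  set u₀ := Classical.choose hex with hu₀def
  show llim g u₀ + (g u₀ - llim g u₀) * (s - llim (ginv κ) u₀) / (ginv κ u₀ - llim (ginv κ) u₀)
      = llim g u + (g u - llim g u) * (s - llim (ginv κ) u) / (ginv κ u - llim (ginv κ) u)
  rcases lt_trichotomy u₀ u with hlt | heq | hgt
  · obtain ⟨e1, e2, e3⟩ := overlap hκ h1 h2 hu₀ hu hlt hs₀ hs
    have d0 : ginv κ u₀ - llim (ginv κ) u₀ ≠ 0 :=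
      ne_of_gt (sub_pos.2 (ell_lt_ginv hκ h1 hu₀))
    have hL : llim g u₀ + (g u₀ - llim g u₀) * (s - llim (ginv κ) u₀) /
        (ginv κ u₀ - llim (ginv κ) u₀) = g u₀ := by
      rw [e1, mul_div_assoc, div_self d0, mul_one]; ring
    have hR : llim g u + (g u - llim g u) * (s - llim (ginv κ) u) /
        (ginv κ u - llim (ginv κ) u) = llim g u := by
      rw [e2, sub_self, mul_zero, zero_div, add_zero]
    rw [hL, hR, e3]
  · rw [heq]
  · obtain ⟨e1, e2, e3⟩ := overlap hκ h1 h2 hu hu₀ hgt hs hs₀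
    have d0 : ginv κ u - llim (ginv κ) u ≠ 0 :=
      ne_of_gt (sub_pos.2 (ell_lt_ginv hκ h1 hu))
    have hL : llim g u₀ + (g u₀ - llim g u₀) * (s - llim (ginv κ) u₀) /
        (ginv κ u₀ - llim (ginv κ) u₀) = llim g u₀ := by
      rw [e2, sub_self, mul_zero, zero_div, add_zero]
    have hR : llim g u + (g u - llim g u) * (s - llim (ginv κ) u) /
        (ginv κ u - llim (ginv κ) u) = g u := by
      rw [e1, mul_div_assoc, div_self d0, mul_one]; ring
    rw [hL, hR, e3]

lemma stilde_neg {s : ℝ}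
    (hex : ¬ ∃ u : ℝ, JumpAt g u ∧ s ∈ Set.Icc (llim (ginv κ) u) (ginv κ u)) :
    stilde g κ s = g (κ s) := by
  rw [stilde, dif_neg hex]

lemma stilde_mem (hg : Dpp g) (hκ : Dpp κ) (h1 : H1 g κ) (h2 : H2 g κ)
    {u s : ℝ} (hu : JumpAt g u) (hs : s ∈ Set.Icc (llim (ginv κ) u) (ginv κ u)) :
    stilde g κ s ∈ Set.Icc (llim g u) (g u) := by
  rw [stilde_eq hκ h1 h2 hu hs]
  have hd : 0 < ginv κ u - llim (ginv κ) u := sub_pos.2 (ell_lt_ginv hκ h1 hu)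
  have hΔ : 0 < g u - llim g u := sub_pos.2 hu
  have hn1 : 0 ≤ s - llim (ginv κ) u := sub_nonneg.2 hs.1
  have hn2 : s - llim (ginv κ) u ≤ ginv κ u - llim (ginv κ) u := by
    have := hs.2; linarith
  constructor
  · have : 0 ≤ (g u - llim g u) * (s - llim (ginv κ) u) / (ginv κ u - llim (ginv κ) u) := by
      positivity
    linarith
  · have : (g u - llim g u) * (s - llim (ginv κ) u) / (ginv κ u - llim (ginv κ) u)
        ≤ g u - llim g u := by
      rw [div_le_iff₀ hd]
      nlinarith
    linarith

lemma stilde_at_r (hκ : Dpp κ) (h1 : H1 g κ) (h2 : H2 g κ)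
    {u : ℝ} (hu : JumpAt g u) : stilde g κ (ginv κ u) = g u := by
  rw [stilde_eq hκ h1 h2 hu ⟨(ell_lt_ginv hκ h1 hu).le, le_rfl⟩]
  have d0 : ginv κ u - llim (ginv κ) u ≠ 0 :=
    ne_of_gt (sub_pos.2 (ell_lt_ginv hκ h1 hu))
  rw [mul_div_assoc, div_self d0, mul_one]; ring

lemma kappa_eq_of_mem_Ico (hκ : Dpp κ) {u s : ℝ} (hu : 0 < u)
    (hlt : llim (ginv κ) u < ginv κ u)
    (hs : s ∈ Set.Ico (llim (ginv κ) u) (ginv κ u)) : κ s = u := by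
  rcases eq_or_lt_of_le hs.1 with heq | h
  · rw [← heq]; exact kappa_ell hκ hu hlt
  · exact kappa_eq_of_mem_Ioo hκ hu ⟨h, hs.2⟩

lemma stilde_le (hg : Dpp g) (hκ : Dpp κ) (h1 : H1 g κ) (h2 : H2 g κ)
    {s : ℝ} (hs : 0 ≤ s) : stilde g κ s ≤ g (κ s) := by
  by_cases hex : ∃ u : ℝ, JumpAt g u ∧ s ∈ Set.Icc (llim (ginv κ) u) (ginv κ u)
  · obtain ⟨u, hu, hmem⟩ := hex
    have hb := (stilde_mem hg hκ h1 h2 hu hmem).2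
    rcases eq_or_lt_of_le hmem.2 with heq | hlt
    · have hks : u ≤ κ s := by rw [heq]; exact kappa_ginv_ge hκ u
      exact hb.trans (hg.1 (Set.mem_Ici.2 (jump_pos h1 hκ hu).le)
        (Set.mem_Ici.2 (dpp_nonneg hκ hs)) hks)
    · have hk : κ s = u := kappa_eq_of_mem_Ico hκ (jump_pos h1 hκ hu)
        (ell_lt_ginv hκ h1 hu) ⟨hmem.1, hlt⟩
      rw [hk]; exact hb
  · rw [stilde_neg hex]

lemma llim_le_stilde (hg : Dpp g) (hκ : Dpp κ) (h1 : H1 g κ) (h2 : H2 g κ)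
    {s : ℝ} (hs : 0 ≤ s) : llim g (κ s) ≤ stilde g κ s := by
  by_cases hex : ∃ u : ℝ, JumpAt g u ∧ s ∈ Set.Icc (llim (ginv κ) u) (ginv κ u)
  · obtain ⟨u, hu, hmem⟩ := hex
    have hu0 := jump_pos h1 hκ hu
    have hlt := ell_lt_ginv hκ h1 hu
    rcases eq_or_lt_of_le hmem.2 with heq | hs2
    · have hks : u ≤ κ s := by rw [heq]; exact kappa_ginv_ge hκ u
      rcases eq_or_lt_of_le hks with heq2 | hlt2
      · rw [← heq2]
        exact (stilde_mem hg hκ h1 h2 hu hmem).1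
      · have hlks : llim κ s = u := by rw [heq]; exact llim_kappa_ginv hκ hu0 hlt
        have hmain := h2 s hs (by rw [hlks]; exact hlt2)
        rw [hlks] at hmain
        rw [← hmain, heq, stilde_at_r hκ h1 h2 hu]
    · have hk : κ s = u := kappa_eq_of_mem_Ico hκ hu0 hlt ⟨hmem.1, hs2⟩
      rw [hk]; exact (stilde_mem hg hκ h1 h2 hu hmem).1
  · rw [stilde_neg hex]
    exact llim_le_self_s7 hg.1 (dpp_nonneg hκ hs)

lemma stilde_eq_comp_of_not_Ico (hg : Dpp g) (hκ : Dpp κ) (h1 : H1 g κ) (h2 : H2 g κ)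
    {x : ℝ} (_hx : 0 ≤ x)
    (hnot : ∀ u, JumpAt g u → x ∉ Set.Ico (llim (ginv κ) u) (ginv κ u)) :
    stilde g κ x = g (κ x) := by
  by_cases hex : ∃ u : ℝ, JumpAt g u ∧ x ∈ Set.Icc (llim (ginv κ) u) (ginv κ u)
  · obtain ⟨u, hu, hmem⟩ := hex
    have hu0 := jump_pos h1 hκ hu
    have hlt := ell_lt_ginv hκ h1 hu
    have hxr : x = ginv κ u := by
      rcases eq_or_lt_of_le hmem.2 with h | h
      · exact h
      · exact absurd ⟨hmem.1, h⟩ (hnot u hu)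
    rw [hxr, stilde_at_r hκ h1 h2 hu]
    have hw : u ≤ κ (ginv κ u) := kappa_ginv_ge hκ u
    rcases eq_or_lt_of_le hw with heq | hwlt
    · rw [← heq]
    · have hr0 : 0 ≤ ginv κ u := ginv_nonneg hκ u
      have hlks : llim κ (ginv κ u) = u := llim_kappa_ginv hκ hu0 hlt
      have hH2 := h2 (ginv κ u) hr0 (by rw [hlks]; exact hwlt)
      rw [hlks] at hH2
      have hnj : ¬ JumpAt g (κ (ginv κ u)) := by
        intro hjw
        have hw0 : 0 < κ (ginv κ u) := jump_pos h1 hκ hjw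
        have h1w : llim (ginv κ) (κ (ginv κ u)) ≤ ginv κ u :=
          ell_le_of_kappa_eq hκ hw0 hr0 rfl
        have h2w : ginv κ u ≤ ginv κ (κ (ginv κ u)) := le_ginv_of_kappa_eq hκ hr0 rfl
        have hnmem : ginv κ u ∉ Set.Ico (llim (ginv κ) (κ (ginv κ u)))
            (ginv κ (κ (ginv κ u))) := by
          have h' := hnot _ hjw; rwa [hxr] at h'
        have heqr : ginv κ u = ginv κ (κ (ginv κ u)) := by
          rcases eq_or_lt_of_le h2w with h | h
          · exact h
          · exact absurd ⟨h1w, h⟩ hnmem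
        have hle2 : ginv κ u ≤ llim (ginv κ) (κ (ginv κ u)) :=
          le_llim_s7 ((ginv_mono hκ).monotoneOn _) hu0.le hwlt
        have := ell_lt_ginv hκ h1 hjw
        linarith
      have hnj' : ¬ (llim g (κ (ginv κ u)) < g (κ (ginv κ u))) := hnj
      have heq2 : llim g (κ (ginv κ u)) = g (κ (ginv κ u)) :=
        le_antisymm (llim_le_self_s7 hg.1 (dpp_nonneg hκ hr0)) (not_lt.1 hnj')
      rw [hH2, heq2]
  · rw [stilde_neg hex]

lemma stilde_mono (hg : Dpp g) (hκ : Dpp κ) (h1 : H1 g κ) (h2 : H2 g κ) :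
    MonotoneOn (stilde g κ) (Set.Ici 0) := by
  rintro s hs t ht hst
  replace hs : (0:ℝ) ≤ s := hs
  replace ht : (0:ℝ) ≤ t := ht
  rcases eq_or_lt_of_le hst with rfl | hst'
  · exact le_rfl
  by_cases hcom : ∃ u : ℝ, JumpAt g u ∧ s ∈ Set.Icc (llim (ginv κ) u) (ginv κ u) ∧
      t ∈ Set.Icc (llim (ginv κ) u) (ginv κ u)
  · obtain ⟨u, hu, hsm, htm⟩ := hcom
    rw [stilde_eq hκ h1 h2 hu hsm, stilde_eq hκ h1 h2 hu htm]
    have hd : 0 < ginv κ u - llim (ginv κ) u := sub_pos.2 (ell_lt_ginv hκ h1 hu)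
    have hΔ : 0 < g u - llim g u := sub_pos.2 hu
    have hsub : s - llim (ginv κ) u ≤ t - llim (ginv κ) u := sub_le_sub_right hst _
    have hΔ' : (0:ℝ) ≤ g u - llim g u := hΔ.le
    gcongr
  · by_cases hPs : ∃ u : ℝ, JumpAt g u ∧ s ∈ Set.Icc (llim (ginv κ) u) (ginv κ u)
    · obtain ⟨u, hu, hsm⟩ := hPs
      by_cases hPt : ∃ u' : ℝ, JumpAt g u' ∧ t ∈ Set.Icc (llim (ginv κ) u') (ginv κ u')
      · obtain ⟨u', hu', htm⟩ := hPt
        have hne : u ≠ u' := by rintro rfl; exact hcom ⟨u, hu, hsm, htm⟩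
        have huu : u < u' := by
          rcases hne.lt_or_gt with h | h
          · exact h
          · exfalso
            have hq : ginv κ u' ≤ llim (ginv κ) u :=
              le_llim_s7 ((ginv_mono hκ).monotoneOn _) (jump_pos h1 hκ hu').le h
            have := htm.2
            have := hsm.1
            linarith
        have hb1 := (stilde_mem hg hκ h1 h2 hu hsm).2
        have hb2 := (stilde_mem hg hκ h1 h2 hu' htm).1
        have hq : g u ≤ llim g u' := le_llim_s7 hg.1 (jump_pos h1 hκ hu).le huu
        linarith
      · have htr : ginv κ u < t := by
          by_contra hc
          push_neg at hc
          exact hPt ⟨u, hu, ⟨hsm.1.trans hst'.le, hc⟩⟩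
        have ht_eq : stilde g κ t = g (κ t) := stilde_neg hPt
        have hb1 := (stilde_mem hg hκ h1 h2 hu hsm).2
        have hκt : u < κ t := lt_kappa_of_ginv_lt hκ htr
        have hmono : g u ≤ g (κ t) := hg.1 (Set.mem_Ici.2 (jump_pos h1 hκ hu).le)
          (Set.mem_Ici.2 (dpp_nonneg hκ ht)) hκt.le
        rw [ht_eq]; linarith
    · by_cases hPt : ∃ u' : ℝ, JumpAt g u' ∧ t ∈ Set.Icc (llim (ginv κ) u') (ginv κ u')
      · obtain ⟨u', hu', htm⟩ := hPt
        have hu'0 := jump_pos h1 hκ hu'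
        have hsl : s < llim (ginv κ) u' := by
          by_contra hc
          push_neg at hc
          exact hPs ⟨u', hu', hc, hst'.le.trans htm.2⟩
        have hs_eq : stilde g κ s = g (κ s) := stilde_neg hPs
        rw [llim, if_neg (not_le.2 hu'0)] at hsl
        obtain ⟨b, ⟨v, ⟨hv0, hvu⟩, rfl⟩, hsb⟩ :=
          exists_lt_of_lt_csSup (s := ginv κ '' Set.Ico 0 u')
            ⟨ginv κ 0, ⟨0, ⟨le_rfl, hu'0⟩, rfl⟩⟩ hsl
        have hκs : κ s ≤ v := kappa_le_of_lt_ginv hκ hv0 hs hsb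
        have hgs : g (κ s) ≤ llim g u' := by
          have hgv : g (κ s) ≤ g v := hg.1 (Set.mem_Ici.2 (dpp_nonneg hκ hs))
            (Set.mem_Ici.2 hv0) hκs
          exact hgv.trans (le_llim_s7 hg.1 hv0 hvu)
        have hb2 := (stilde_mem hg hκ h1 h2 hu' htm).1
        rw [hs_eq]; linarith
      · rw [stilde_neg hPs, stilde_neg hPt]
        exact hg.1 (Set.mem_Ici.2 (dpp_nonneg hκ hs)) (Set.mem_Ici.2 (dpp_nonneg hκ ht))
          (hκ.1 (Set.mem_Ici.2 hs) (Set.mem_Ici.2 ht) hst)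

lemma stilde_rc (hg : Dpp g) (hκ : Dpp κ) (h1 : H1 g κ) (h2 : H2 g κ) :
    RightCts (stilde g κ) := by
  intro x hx
  by_cases hA : ∃ u : ℝ, JumpAt g u ∧ x ∈ Set.Ico (llim (ginv κ) u) (ginv κ u)
  · obtain ⟨u, hu, hmem⟩ := hA
    have hcont : ContinuousWithinAt (fun t : ℝ => llim g u +
        (g u - llim g u) * (t - llim (ginv κ) u) / (ginv κ u - llim (ginv κ) u))
        (Set.Ici x) x := by
      apply Continuous.continuousWithinAt
      continuity
    have hxval : stilde g κ x = llim g u +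
        (g u - llim g u) * (x - llim (ginv κ) u) / (ginv κ u - llim (ginv κ) u) :=
      stilde_eq hκ h1 h2 hu ⟨hmem.1, hmem.2.le⟩
    have hev : (fun t : ℝ => llim g u +
        (g u - llim g u) * (t - llim (ginv κ) u) / (ginv κ u - llim (ginv κ) u))
        =ᶠ[nhdsWithin x (Set.Ici x)] stilde g κ := by
      have hIoo : Set.Ico x (ginv κ u) ∈ nhdsWithin x (Set.Ici x) := by
        rw [← Set.Ici_inter_Iio]
        exact Filter.inter_mem self_mem_nhdsWithin
          (mem_nhdsWithin_of_mem_nhds (Iio_mem_nhds hmem.2))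
      filter_upwards [hIoo] with t ht
      exact (stilde_eq hκ h1 h2 hu ⟨hmem.1.trans ht.1, ht.2.le⟩).symm
    have := hcont.tendsto
    rw [ContinuousWithinAt, hxval]
    exact Filter.Tendsto.congr' hev this
  · push_neg at hA
    have hxval : stilde g κ x = g (κ x) :=
      stilde_eq_comp_of_not_Ico hg hκ h1 h2 hx hA
    have hmonoS := stilde_mono hg hκ h1 h2
    have hup : ContinuousWithinAt (fun t => g (κ t)) (Set.Ici x) x := by
      have hκx : 0 ≤ κ x := dpp_nonneg hκ hx
      exact (hg.2.1 (κ x) hκx).comp (hκ.2.1 x hx)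
        (fun t (ht : x ≤ t) => hκ.1 (Set.mem_Ici.2 hx) (Set.mem_Ici.2 (hx.trans ht)) ht)
    rw [ContinuousWithinAt, hxval]
    refine tendsto_of_tendsto_of_tendsto_of_le_of_le' tendsto_const_nhds hup ?_ ?_
    · filter_upwards [self_mem_nhdsWithin] with t ht
      rw [← hxval]
      exact hmonoS (Set.mem_Ici.2 hx) (Set.mem_Ici.2 (hx.trans ht)) ht
    · filter_upwards [self_mem_nhdsWithin] with t ht
      exact stilde_le hg hκ h1 h2 (hx.trans ht)

lemma left_lim_of_monotoneOn {f : ℝ → ℝ} (hf : MonotoneOn f (Set.Ici 0)) {u : ℝ}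
    (hu : 0 < u) :
    Filter.Tendsto f (nhdsWithin u (Set.Iio u)) (nhds (llim f u)) := by
  rw [llim, if_neg (not_le.2 hu)]
  have hbdd : BddAbove (f '' Set.Ico 0 u) := bddAbove_Ico_image hf hu.le
  have hne : (f '' Set.Ico 0 u).Nonempty := ⟨f 0, 0, ⟨le_rfl, hu⟩, rfl⟩
  refine tendsto_order.2 ⟨?_, ?_⟩
  · intro a ha
    obtain ⟨b, ⟨v, ⟨hv0, hvu⟩, rfl⟩, hab⟩ :=
      exists_lt_of_lt_csSup (s := f '' Set.Ico 0 u) hne ha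
    filter_upwards [Ioo_mem_nhdsLT hvu] with t ht
    exact hab.trans_le (hf (Set.mem_Ici.2 hv0) (Set.mem_Ici.2 (hv0.trans ht.1.le)) ht.1.le)
  · intro b hb
    filter_upwards [Ioo_mem_nhdsLT hu] with t ht
    exact (le_csSup hbdd ⟨t, ⟨ht.1.le, ht.2⟩, rfl⟩).trans_lt hb

end Aux

/-- For a compatible pair, `g ∘̃ κ` is non-decreasing and right-continuous with
left limits. -/
theorem stmt7 (g κ : ℝ → ℝ) (hg : Dpp g) (hκ : Dpp κ)
    (h1 : H1 g κ) (h2 : H2 g κ) :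
    MonotoneOn (stilde g κ) (Set.Ici 0) ∧ RightCts (stilde g κ) ∧
    (∀ u : ℝ, 0 < u →
      Filter.Tendsto (stilde g κ) (nhdsWithin u (Set.Iio u))
        (nhds (llim (stilde g κ) u))) := by
  have hm := stilde_mono hg hκ h1 h2
  exact ⟨hm, stilde_rc hg hκ h1 h2, fun u hu => left_lim_of_monotoneOn hm hu⟩
end
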